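/- Each 4-valent melonic bubble b satisfies max_{r∈ℛ₂(b)} ω(r) = 4, i.e. its bubble dimension is d̃_b = −2; as a consequence, 4-valent melonic interactions are not power-counting renormalizable in this rank-4 model. -/

import Mathlib

/-!  Rank-4 tensorial bubbles and Feynman graphs, following
Carrozza–Lahoche–Oriti, "Renormalizable Group Field Theory beyond melonic
diagrams: an example in rank four". -/

open Finset

/-- A rank-4 bubble: a connected bipartite 4-colored regular graph, given by
finite sets of black and white nodes together with, for each color, a perfect
matching (bijection) between black and white nodes. -/
structure Bubble where
  B : Type
  W : Type
  [fB : Fintype B]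
  [fW : Fintype W]
  [dB : DecidableEq B]
  [dW : DecidableEq W]
  /-- for each color `i`, the perfect matching of color `i` -/
  edge : Fin 4 → B ≃ W
  /-- connectedness: the only subsets of nodes closed under colored adjacency
  are `∅` and `univ` -/
  conn : ∀ S : Finset (B ⊕ W),
    (∀ x ∈ S, ∀ y : B ⊕ W,
      (∃ i : Fin 4, (∃ u : B, x = Sum.inl u ∧ y = Sum.inr (edge i u)) ∨
        (∃ u : B, y = Sum.inl u ∧ x = Sum.inr (edge i u))) → y ∈ S) →
    S = ∅ ∨ S = Finset.univ

attribute [instance] Bubble.fB Bubble.fW Bubble.dB Bubble.dW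

/-- The valency of a bubble: its total number of nodes. -/
def Bubble.valency (b : Bubble) : ℕ := Fintype.card b.B + Fintype.card b.W

/-- Isomorphism of bubbles (color-preserving). -/
def Bubble.Iso (b b' : Bubble) : Prop :=
  ∃ (eB : b.B ≃ b'.B) (eW : b.W ≃ b'.W), ∀ (i : Fin 4) (x : b.B),
    eW (b.edge i x) = b'.edge i (eB x)

/-- The elementary 2-valent bubble. -/
def twoValent : Bubble where
  B := PUnit
  W := PUnit
  edge := fun _ => Equiv.refl PUnit
  conn := by
    intro S hS
    by_cases h : S = ∅
    · exact Or.inl h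
    · right
      obtain ⟨x, hx⟩ := Finset.nonempty_iff_ne_empty.mpr h
      have hother : ∀ z ∈ S, ∀ y : PUnit.{1} ⊕ PUnit.{1}, y ∈ S := by
        intro z hz y
        rcases z with ⟨⟩ | ⟨⟩ <;> rcases y with ⟨⟩ | ⟨⟩
        · exact hz
        · exact hS _ hz _ ⟨0, Or.inl ⟨PUnit.unit, rfl, rfl⟩⟩
        · exact hS _ hz _ ⟨0, Or.inr ⟨PUnit.unit, rfl, rfl⟩⟩
        · exact hz
      exact Finset.eq_univ_of_forall (hother x hx)

/-- The elementary necklace in which color `1` (index `0`) is paired with the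
color of index `ℓ.succ`, `ℓ : Fin 3`: its four nodes form a 4-cycle along which
double lines with the colors `{0, ℓ.succ}` alternate with double lines carrying
the complementary pair of colors. -/
def elemNecklace (ℓ : Fin 3) : Bubble where
  B := Fin 2
  W := Fin 2
  edge := fun c => if c = 0 ∨ c = ℓ.succ then Equiv.refl (Fin 2) else Equiv.swap 0 1
  conn := by fin_cases ℓ <;> decide

/-- The 4-valent melonic bubble of color `ℓ`. -/
def melon4 (ℓ : Fin 4) : Bubble where
  B := Fin 2
  W := Fin 2
  edge := fun c => if c = ℓ then Equiv.swap 0 1 else Equiv.refl (Fin 2)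
  conn := by fin_cases ℓ <;> decide

/-- The colored matchings of the connected sum of `b₁` and `b₂` at a black node
`n₁` of `b₁` and a white node `n₂` of `b₂`: delete `n₁, n₂` and join the
dangling colored half-lines according to their colors. -/
def connSumEdge (b₁ b₂ : Bubble) (n₁ : b₁.B) (n₂ : b₂.W) (i : Fin 4) :
    ({x : b₁.B // x ≠ n₁} ⊕ b₂.B) → (b₁.W ⊕ {y : b₂.W // y ≠ n₂})
  | Sum.inl x => Sum.inl (b₁.edge i x.1)
  | Sum.inr y =>
      if h : b₂.edge i y = n₂ then Sum.inl (b₁.edge i n₁)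
      else Sum.inr ⟨b₂.edge i y, h⟩

/-- `b₃` is the connected sum of `b₁` and `b₂` at `n₁` and `n₂`. -/
def IsConnSumAt (b₃ b₁ b₂ : Bubble) (n₁ : b₁.B) (n₂ : b₂.W) : Prop :=
  ∃ (eB : b₃.B ≃ ({x : b₁.B // x ≠ n₁} ⊕ b₂.B))
    (eW : b₃.W ≃ (b₁.W ⊕ {y : b₂.W // y ≠ n₂})),
    ∀ (i : Fin 4) (x : b₃.B), eW (b₃.edge i x) = connSumEdge b₁ b₂ n₁ n₂ i (eB x)

/-- The set `𝔹` of necklace bubbles: the 2-valent bubble together with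
everything generated by the three elementary necklaces under connected sums. -/
inductive IsNecklace : Bubble → Prop
  | two {b : Bubble} : b.Iso twoValent → IsNecklace b
  | elem {b : Bubble} (ℓ : Fin 3) : b.Iso (elemNecklace ℓ) → IsNecklace b
  | sum {b b₁ b₂ : Bubble} (n₁ : b₁.B) (n₂ : b₂.W) :
      IsNecklace b₁ → IsNecklace b₂ → IsConnSumAt b b₁ b₂ n₁ n₂ → IsNecklace b

/-- `(n, m)` is a `k`-dipole of the bubble `b`: `n` and `m` are joined by
exactly `k` colored lines. -/
def Bubble.IsDipole (b : Bubble) (n : b.B) (m : b.W) (k : ℕ) : Prop :=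
  (Finset.univ.filter fun i : Fin 4 => b.edge i n = m).card = k

/-- The colored matchings of the bubble obtained from `b` by contracting the
pair of nodes `(n, m)`: delete `n`, `m` and all colored lines between them, and
reconnect the dangling colored half-lines according to their colors. -/
def contractEdge (b : Bubble) (n : b.B) (m : b.W) (i : Fin 4)
    (x : {x : b.B // x ≠ n}) : {y : b.W // y ≠ m} :=
  if h : b.edge i x.1 = m then
    ⟨b.edge i n, fun hm => x.2 ((b.edge i).injective (h.trans hm.symm))⟩
  else ⟨b.edge i x.1, h⟩

/-- `b'` is the bubble obtained from `b` by contracting the dipole `(n, m)`. -/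
def Bubble.IsContractionAt (b' b : Bubble) (n : b.B) (m : b.W) : Prop :=
  ∃ (eB : b'.B ≃ {x : b.B // x ≠ n}) (eW : b'.W ≃ {y : b.W // y ≠ m}),
    ∀ (i : Fin 4) (x : b'.B), eW (b'.edge i x) = contractEdge b n m i (eB x)

/-- A Feynman graph: a finite collection of bubbles (the vertices) together
with 0-lines, each joining a black node to a white node, every node being
incident to at most one 0-line. Nodes not incident to a 0-line carry external
legs. -/
structure FGraph where
  V : Type
  [fV : Fintype V]
  [dV : DecidableEq V]
  bub : V → Bubble
  L : Type
  [fL : Fintype L]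
  [dL : DecidableEq L]
  /-- the black endpoint of a 0-line -/
  lb : L → Σ v : V, (bub v).B
  /-- the white endpoint of a 0-line -/
  lw : L → Σ v : V, (bub v).W
  lb_inj : Function.Injective lb
  lw_inj : Function.Injective lw

attribute [instance] FGraph.fV FGraph.dV FGraph.fL FGraph.dL

/-- The black nodes of a Feynman graph. -/
abbrev FGraph.NB (G : FGraph) : Type := Σ v : G.V, (G.bub v).B

/-- The white nodes of a Feynman graph. -/
abbrev FGraph.NW (G : FGraph) : Type := Σ v : G.V, (G.bub v).W

/-- The colored line of color `i` leaving the black node `x`. -/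
def FGraph.colorMap (G : FGraph) (i : Fin 4) (x : G.NB) : G.NW :=
  ⟨x.1, (G.bub x.1).edge i x.2⟩

/-- `L(𝒢)`: the number of 0-lines. -/
def FGraph.numL (G : FGraph) : ℕ := Fintype.card G.L

/-- `V(𝒢)`: the number of vertices (bubbles). -/
def FGraph.numV (G : FGraph) : ℕ := Fintype.card G.V

/-- `N(𝒢)`: the number of external legs. -/
def FGraph.numN (G : FGraph) : ℕ :=
  (Fintype.card G.NB - Fintype.card G.L) + (Fintype.card G.NW - Fintype.card G.L)

/-- `l'` is the successor of `l` in the face of color `i`: the white endpoint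
of `l'` is joined by a color-`i` line to the black endpoint of `l`. -/
def FGraph.NextRel (G : FGraph) (i : Fin 4) (l l' : G.L) : Prop :=
  G.lw l' = G.colorMap i (G.lb l)

/-- `C` is (the set of 0-lines of) an internal face of color `i`: a cycle of
the successor relation, i.e. a minimal nonempty set in which every 0-line has
its successor. -/
def FGraph.IsFace (G : FGraph) (i : Fin 4) (C : Finset G.L) : Prop :=
  C.Nonempty ∧ (∀ l ∈ C, ∃ l' ∈ C, G.NextRel i l l') ∧
    ∀ D : Finset G.L, D ⊆ C → D.Nonempty →
      (∀ l ∈ D, ∃ l' ∈ D, G.NextRel i l l') → D = C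

/-- `F(𝒢)`: the number of internal faces. -/
noncomputable def FGraph.numF (G : FGraph) : ℕ :=
  Set.ncard {p : Fin 4 × Finset G.L | G.IsFace p.1 p.2}

open Classical in
/-- The line/face incidence matrix `ε`, with internal faces coherently oriented
so that every 0-line occurs in a face it belongs to with matching
orientation. -/
noncomputable def FGraph.epsMat (G : FGraph) :
    Matrix G.L (Fin 4 × Finset G.L) ℚ :=
  fun l p => if G.IsFace p.1 p.2 ∧ l ∈ p.2 then 1 else 0

/-- `R(𝒢)`: the rank of the incidence matrix `ε` over `ℚ`. -/
noncomputable def FGraph.numR (G : FGraph) : ℕ := G.epsMat.rank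

/-- The Abelian degree of divergence `ω(𝒢) = -2L + 3(F - R)`. -/
noncomputable def FGraph.omega (G : FGraph) : ℤ :=
  -2 * (G.numL : ℤ) + 3 * ((G.numF : ℤ) - (G.numR : ℤ))

/-- `ρ(𝒢) = (L - V + 1) - (F - R)`. -/
noncomputable def FGraph.rho (G : FGraph) : ℤ :=
  ((G.numL : ℤ) - (G.numV : ℤ) + 1) - ((G.numF : ℤ) - (G.numR : ℤ))

/-- Adjacency of the vertices `a, b` through a 0-line belonging to `T`. -/
def FGraph.VAdjOn (G : FGraph) (T : Finset G.L) (a b : G.V) : Prop :=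
  ∃ l ∈ T, ((G.lb l).1 = a ∧ (G.lw l).1 = b) ∨ ((G.lb l).1 = b ∧ (G.lw l).1 = a)

/-- Adjacency of the vertices `a, b` through some 0-line. -/
def FGraph.VAdj (G : FGraph) (a b : G.V) : Prop :=
  ∃ l : G.L, ((G.lb l).1 = a ∧ (G.lw l).1 = b) ∨ ((G.lb l).1 = b ∧ (G.lw l).1 = a)

/-- Connectedness of a Feynman graph. -/
def FGraph.Connected (G : FGraph) : Prop :=
  Nonempty G.V ∧ ∀ v v' : G.V, Relation.ReflTransGen G.VAdj v v'

/-- `T` is a spanning tree of 0-lines of `𝒢`. -/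
def FGraph.IsSpanningTree (G : FGraph) (T : Finset G.L) : Prop :=
  T.card + 1 = Fintype.card G.V ∧
    ∀ v v' : G.V, Relation.ReflTransGen (G.VAdjOn T) v v'

/-- Rerouting of a color-`i` half-line through the contracted lines `T`:
as long as the reached white node is an endpoint of a contracted line, jump to
the color-`i` line leaving the black endpoint of that contracted line. -/
noncomputable def FGraph.reroute (G : FGraph) (T : Finset G.L) (i : Fin 4) :
    ℕ → G.NW → G.NW
  | 0, w => w
  | fuel + 1, w =>
      if h : ∃ l ∈ T, G.lw l = w then
        G.reroute T i fuel (G.colorMap i (G.lb h.choose))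
      else w

/-- `G'` is the Feynman graph obtained from `G` by contracting all the 0-lines
of `T` (deleting their end nodes and the colored lines between them, and
reconnecting the dangling colored half-lines by colors). -/
def FGraph.IsQuotientBy (G' G : FGraph) (T : Finset G.L) : Prop :=
  ∃ (eL : G'.L ≃ {l : G.L // l ∉ T})
    (eB : G'.NB ≃ {x : G.NB // ∀ l ∈ T, G.lb l ≠ x})
    (eW : G'.NW ≃ {y : G.NW // ∀ l ∈ T, G.lw l ≠ y}),
    (∀ l' : G'.L,
      (eB (G'.lb l')).1 = G.lb (eL l').1 ∧ (eW (G'.lw l')).1 = G.lw (eL l').1) ∧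
    ∀ (i : Fin 4) (x : G'.NB),
      (eW (G'.colorMap i x)).1 = G.reroute T i T.card (G.colorMap i (eB x).1)

/-- `G'` is the Feynman graph obtained from `G` by contracting the 0-line `l`. -/
def FGraph.IsContractionAt (G' G : FGraph) (l : G.L) : Prop :=
  FGraph.IsQuotientBy G' G {l}

/-- The 0-line `l` is a `k`-dipole: its two end nodes are joined by exactly
`k - 1` colored lines. -/
def FGraph.IsDipoleLine (G : FGraph) (l : G.L) (k : ℕ) : Prop :=
  (Finset.univ.filter fun i : Fin 4 => G.colorMap i (G.lb l) = G.lw l).card = k - 1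

/-- A Feynman graph is 3-dipole contractible if its 0-lines can be contracted
one after the other, each being a 3-dipole at the moment of its contraction. -/
inductive DipoleContractible : FGraph → Prop
  | nil {G : FGraph} : Fintype.card G.L = 0 → DipoleContractible G
  | step {G G' : FGraph} (l : G.L) : G.IsDipoleLine l 3 →
      FGraph.IsContractionAt G' G l → DipoleContractible G' → DipoleContractible G

/-- A necklace graph: a connected Feynman graph all of whose vertices are
necklace bubbles. -/
def FGraph.IsNecklaceGraph (G : FGraph) : Prop :=
  G.Connected ∧ ∀ v : G.V, IsNecklace (G.bub v)

/-- `r ∈ ℛ₂(b)`: a Feynman graph with a single vertex `b` and exactly two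
external legs. -/
def IsR2 (r : FGraph) (b : Bubble) : Prop :=
  Fintype.card r.V = 1 ∧ (∀ v : r.V, (r.bub v).Iso b) ∧ r.numN = 2

/-- `M = max_{r ∈ ℛ₂(b)} ω(r)`. -/
def IsMaxOmega2 (b : Bubble) (M : ℤ) : Prop :=
  (∃ r : FGraph, IsR2 r b ∧ r.omega = M) ∧ ∀ r : FGraph, IsR2 r b → r.omega ≤ M

/-- The bubble dimension `d̃_b = 2 - max_{r ∈ ℛ₂(b)} ω(r)`. -/
def HasBubbleDim (b : Bubble) (d : ℤ) : Prop :=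
  ∃ M : ℤ, IsMaxOmega2 b M ∧ d = 2 - M

open Classical in
/-- The (unique, if any) successor of the 0-line `l` in the face of color `i`. -/
noncomputable def FGraph.nextL (G : FGraph) (i : Fin 4) (l : G.L) : Option G.L :=
  if h : ∃ l' : G.L, G.NextRel i l l' then some h.choose else none

/-- The ordered product of the group elements attached to the `k` consecutive
0-lines of the face of color `i` starting at `l`. -/
noncomputable def FGraph.holPath (G : FGraph) {Γ : Type*} [Monoid Γ]
    (h : G.L → Γ) (i : Fin 4) : ℕ → G.L → Γ
  | 0, _ => 1
  | k + 1, l => h l * (G.nextL i l).elim 1 (fun l' => FGraph.holPath G h i k l')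


/-!
A graph in `ℛ₂(b)` for a 4-valent bubble `b` has a single 0-line, since every 0-line removes two
of the four external legs. Its internal faces are then the one-line faces given by the `k` colored
lines parallel to that 0-line, so `F = k`, the incidence matrix is a single nonzero row, `R = 1`,
and `ω = -2 + 3 (k - 1)`. In a melonic bubble `k` is `3` for the pairs `(b₁, w₁)`, `(b₂, w₂)` and
`1` for the other two pairs, whence the maximum `ω = 4`.
-/

theorem Matrix.rank_pos_of_ne_zero {m n K : Type*} [Fintype m] [Fintype n] [Field K]
    {A : Matrix m n K} (hA : A ≠ 0) : 0 < A.rank := by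
  obtain ⟨i, j, hij⟩ : ∃ i j, A i j ≠ 0 := by
    by_contra! h
    exact hA (Matrix.ext h)
  rw [Matrix.rank_eq_finrank_span_cols]
  refine Module.finrank_pos_iff_exists_ne_zero.mpr
    ⟨⟨A.transpose j, Submodule.subset_span ⟨j, rfl⟩⟩, fun h => hij ?_⟩
  exact congrFun (congrArg Subtype.val h) i

def Bubble.lineColors (b : Bubble) (x : b.B) (y : b.W) : Finset (Fin 4) :=
  {i | b.edge i x = y}

theorem Bubble.Iso.exists_lineColors_eq {b b' : Bubble} (h : b.Iso b') (x : b.B) (y : b.W) :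
    ∃ x' y', b.lineColors x y = b'.lineColors x' y' := by
  obtain ⟨eB, eW, he⟩ := h
  refine ⟨eB x, eW y, Finset.filter_congr fun i _ => ?_⟩
  rw [← he, eW.apply_eq_iff_eq]

theorem Bubble.card_W_eq_card_B (b : Bubble) : Fintype.card b.W = Fintype.card b.B :=
  (Fintype.card_congr (b.edge 0)).symm

namespace FGraph

instance (G : FGraph) (i : Fin 4) (l l' : G.L) : Decidable (G.NextRel i l l') :=
  inferInstanceAs (Decidable (G.lw l' = G.colorMap i (G.lb l)))

def loopColors (G : FGraph) (l : G.L) : Finset (Fin 4) :=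
  {i | G.NextRel i l l}

theorem loopColors_eq_lineColors {G : FGraph} {l : G.L} {v : G.V} {x : (G.bub v).B}
    {y : (G.bub v).W} (hx : G.lb l = ⟨v, x⟩) (hy : G.lw l = ⟨v, y⟩) :
    G.loopColors l = (G.bub v).lineColors x y := by
  refine Finset.filter_congr fun i _ => ?_
  rw [NextRel, colorMap, hx, hy, Sigma.mk.inj_iff, heq_eq_eq]
  exact ⟨fun h => h.2.symm, fun h => ⟨rfl, h.symm⟩⟩

theorem exists_loopColors_eq_lineColors (G : FGraph) [Subsingleton G.V] (l : G.L) :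
    ∃ v x y, G.loopColors l = (G.bub v).lineColors x y := by
  rcases hx : G.lb l with ⟨v, x⟩
  rcases hy : G.lw l with ⟨w, y⟩
  obtain rfl := Subsingleton.elim v w
  exact ⟨v, x, y, loopColors_eq_lineColors hx hy⟩

section SingleLine

variable {G : FGraph} [Subsingleton G.L] (l : G.L)

theorem isFace_iff_of_subsingleton (i : Fin 4) (C : Finset G.L) :
    G.IsFace i C ↔ C = {l} ∧ i ∈ G.loopColors l := by
  have hsub : ∀ D : Finset G.L, D.Nonempty → D = {l} := fun D ⟨d, hd⟩ =>
    Finset.eq_singleton_iff_unique_mem.mpr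
      ⟨Subsingleton.elim d l ▸ hd, fun _ _ => Subsingleton.elim _ _⟩
  simp only [loopColors, Finset.mem_filter, Finset.mem_univ, true_and]
  constructor
  · rintro ⟨hC, hnext, -⟩
    obtain rfl := hsub C hC
    obtain ⟨l', -, h⟩ := hnext l (Finset.mem_singleton_self l)
    exact ⟨rfl, Subsingleton.elim l' l ▸ h⟩
  · rintro ⟨rfl, h⟩
    refine ⟨Finset.singleton_nonempty l, fun l' hl' => ⟨l, Finset.mem_singleton_self l, ?_⟩,
      fun D _ hD _ => hsub D hD⟩
    rwa [Finset.mem_singleton.mp hl']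

theorem numF_eq_card_loopColors : G.numF = #(G.loopColors l) := by
  have hinj : Function.Injective fun i : Fin 4 => (i, ({l} : Finset G.L)) :=
    fun _ _ h => congrArg Prod.fst h
  have hfaces : {p : Fin 4 × Finset G.L | G.IsFace p.1 p.2}
      = (fun i => (i, {l})) '' ↑(G.loopColors l) := by
    ext ⟨i, C⟩
    simp only [Set.mem_ofPred_eq, isFace_iff_of_subsingleton l, Set.mem_image, Finset.mem_coe,
      Prod.mk.injEq]
    constructor
    · rintro ⟨rfl, hi⟩
      exact ⟨i, hi, rfl, rfl⟩
    · rintro ⟨j, hj, rfl, rfl⟩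
      exact ⟨rfl, hj⟩
  rw [numF, hfaces, Set.ncard_image_of_injective _ hinj, Set.ncard_coe_finset]

theorem numR_eq_one (hl : (G.loopColors l).Nonempty) : G.numR = 1 := by
  obtain ⟨i, hi⟩ := hl
  have hε : G.epsMat ≠ 0 := fun h => by
    have := congrFun (congrFun h l) (i, {l})
    simp [epsMat, (isFace_iff_of_subsingleton l i {l}).mpr ⟨rfl, hi⟩] at this
  have hle : G.numR ≤ Fintype.card G.L := G.epsMat.rank_le_card_height
  have hcard : Fintype.card G.L = 1 :=
    Fintype.card_eq_one_iff.mpr ⟨l, fun _ => Subsingleton.elim _ _⟩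
  have hpos : 0 < G.numR := Matrix.rank_pos_of_ne_zero hε
  omega

theorem omega_eq_of_subsingleton (hl : (G.loopColors l).Nonempty) :
    G.omega = 3 * #(G.loopColors l) - 5 := by
  have hL : G.numL = 1 := Fintype.card_eq_one_iff.mpr ⟨l, fun _ => Subsingleton.elim _ _⟩
  rw [omega, hL, numF_eq_card_loopColors l, numR_eq_one l hl]
  push_cast
  ring

end SingleLine

end FGraph

def Bubble.tadpole (b : Bubble) (x : b.B) (y : b.W) : FGraph where
  V := Unit
  bub _ := b
  L := Unit
  lb _ := ⟨(), x⟩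
  lw _ := ⟨(), y⟩
  lb_inj _ _ _ := rfl
  lw_inj _ _ _ := rfl

instance (b : Bubble) (x : b.B) (y : b.W) : Subsingleton (b.tadpole x y).L :=
  inferInstanceAs (Subsingleton Unit)

theorem Bubble.isR2_tadpole (b : Bubble) (hb : Fintype.card b.B = 2) (x : b.B) (y : b.W) :
    IsR2 (b.tadpole x y) b := by
  refine ⟨rfl, fun _ => ⟨Equiv.refl _, Equiv.refl _, fun _ _ => rfl⟩, ?_⟩
  change Fintype.card (Σ _ : Unit, b.B) - 1 + (Fintype.card (Σ _ : Unit, b.W) - 1) = 2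
  simp [b.card_W_eq_card_B, hb]

theorem Bubble.loopColors_tadpole (b : Bubble) (x : b.B) (y : b.W) :
    (b.tadpole x y).loopColors () = b.lineColors x y :=
  FGraph.loopColors_eq_lineColors (v := ()) rfl rfl

theorem Bubble.omega_tadpole (b : Bubble) (x : b.B) (y : b.W) (h : (b.lineColors x y).Nonempty) :
    (b.tadpole x y).omega = 3 * #(b.lineColors x y) - 5 := by
  have hloop := b.loopColors_tadpole x y
  rw [FGraph.omega_eq_of_subsingleton () (hloop ▸ h), hloop]

section R2

variable {r : FGraph} {b : Bubble}

theorem IsR2.card_NB (hr : IsR2 r b) : Fintype.card r.NB = Fintype.card b.B := by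
  have hfiber : ∀ v : r.V, Fintype.card (r.bub v).B = Fintype.card b.B := fun v => by
    obtain ⟨eB, -, -⟩ := hr.2.1 v
    exact Fintype.card_congr eB
  rw [Fintype.card_sigma, Finset.sum_congr rfl fun v _ => hfiber v, Finset.sum_const,
    Finset.card_univ, hr.1, one_smul]

theorem IsR2.card_NW (hr : IsR2 r b) : Fintype.card r.NW = Fintype.card b.B := by
  have hfiber : ∀ v : r.V, Fintype.card (r.bub v).W = Fintype.card b.B := fun v => by
    obtain ⟨-, eW, -⟩ := hr.2.1 v
    exact (Fintype.card_congr eW).trans b.card_W_eq_card_B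
  rw [Fintype.card_sigma, Finset.sum_congr rfl fun v _ => hfiber v, Finset.sum_const,
    Finset.card_univ, hr.1, one_smul]

theorem IsR2.numL_add_one (hr : IsR2 r b) : r.numL + 1 = Fintype.card b.B := by
  have hN : r.numN = 2 := hr.2.2
  have hle : Fintype.card r.L ≤ Fintype.card r.NB := Fintype.card_le_of_injective _ r.lb_inj
  rw [FGraph.numN, hr.card_NB, hr.card_NW] at hN
  rw [hr.card_NB] at hle
  rw [FGraph.numL]
  omega

theorem IsR2.exists_omega_eq (hb : Fintype.card b.B = 2)
    (hlines : ∀ x y, (b.lineColors x y).Nonempty) (hr : IsR2 r b) :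
    ∃ x y, r.omega = 3 * #(b.lineColors x y) - 5 := by
  have hL : Fintype.card r.L = 1 := by
    have := hr.numL_add_one
    rw [hb, FGraph.numL] at this
    omega
  obtain ⟨l, -⟩ := Fintype.card_eq_one_iff.mp hL
  have : Subsingleton r.L := Fintype.card_le_one_iff_subsingleton.mp hL.le
  have : Subsingleton r.V := Fintype.card_le_one_iff_subsingleton.mp hr.1.le
  obtain ⟨v, x, y, hloop⟩ := r.exists_loopColors_eq_lineColors l
  obtain ⟨x', y', hiso⟩ := (hr.2.1 v).exists_lineColors_eq x y
  rw [hiso] at hloop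
  exact ⟨x', y', hloop ▸ FGraph.omega_eq_of_subsingleton l (hloop ▸ hlines x' y')⟩

end R2

theorem melon4_card_lineColors (ℓ : Fin 4) (x : (melon4 ℓ).B) (y : (melon4 ℓ).W) :
    #((melon4 ℓ).lineColors x y) = 1 ∨ #((melon4 ℓ).lineColors x y) = 3 := by
  revert x y
  fin_cases ℓ <;> decide

theorem melon4_exists_card_lineColors_eq_three (ℓ : Fin 4) :
    ∃ x y, #((melon4 ℓ).lineColors x y) = 3 := by
  fin_cases ℓ <;> decide

/-- Each 4-valent melonic bubble has `max_{r ∈ ℛ₂} ω(r) = 4`, i.e. bubble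
dimension `d̃ = -2`. -/
theorem melon4_bubbleDim (ℓ : Fin 4) :
    IsMaxOmega2 (melon4 ℓ) 4 ∧ HasBubbleDim (melon4 ℓ) (-2) := by
  have hlines : ∀ x y, ((melon4 ℓ).lineColors x y).Nonempty := fun x y =>
    Finset.card_pos.mp (by rcases melon4_card_lineColors ℓ x y with h | h <;> rw [h] <;> norm_num)
  have hmax : IsMaxOmega2 (melon4 ℓ) 4 := by
    obtain ⟨x, y, hxy⟩ := melon4_exists_card_lineColors_eq_three ℓ
    refine ⟨⟨(melon4 ℓ).tadpole x y, (melon4 ℓ).isR2_tadpole rfl x y, ?_⟩, fun r hr => ?_⟩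
    · rw [Bubble.omega_tadpole _ _ _ (hlines x y), hxy]
      norm_num
    · obtain ⟨x, y, hω⟩ := hr.exists_omega_eq rfl hlines
      rcases melon4_card_lineColors ℓ x y with h | h <;> rw [hω, h] <;> norm_num
  exact ⟨hmax, 4, hmax, by norm_num⟩
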